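/- Let a, b, c, d, N, x₀, y₀, z₀, w₀ be elements of a commutative ring with N² = a·b·c·d and a·x₀⁴ + b·y₀⁴ + c·z₀⁴ + d·w₀⁴ = 0. Define x₁, y₁, z₁, w₁ by the endomorphism formulas: x₁ = x₀((3bc·y₀⁴z₀⁴ + ad·x₀⁴w₀⁴)(a·x₀⁴ + d·w₀⁴) + 4N·x₀²y₀²z₀²w₀²(b·y₀⁴ − c·z₀⁴)), and similarly y₁, z₁, w₁ as displayed. Then a·x₁⁴ + b·y₁⁴ + c·z₁⁴ + d·w₁⁴ = 0. -/

import Mathlib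

/-!
Writing `A = a x₀⁴`, `B = b y₀⁴`, `C = c z₀⁴`, `D = d w₀⁴` and `M = N x₀² y₀² z₀² w₀²`, each
new coordinate is the old one times a polynomial in `A, B, C, D, M`, e.g. `x₁ = x₀ P` with
`P = (3BC + AD)(A + D) + 4M(B - C)`, so `a x₁⁴ = A P⁴`. This reduces the claim to the point
`(1, 1, 1, 1)` on the surface with coefficients `A, B, C, D`, where `A + B + C + D = 0` and
`M² = ABCD`. Expanding the fourth powers and using `M² = ABCD` splits the sum into a part free
of `M` plus `M` times another such part; after eliminating `D = -(A + B + C)` both vanish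
identically.
-/

theorem add_mul_pow_four_of_sq_eq {R : Type*} [CommRing R] {M K : R} (hM : M ^ 2 = K)
    (U V : R) :
    (U + M * V) ^ 4 = (U ^ 4 + 6 * U ^ 2 * V ^ 2 * K + V ^ 4 * K ^ 2)
      + M * (4 * U ^ 3 * V + 4 * U * V ^ 3 * K) := by
  linear_combination (6 * U ^ 2 * V ^ 2 + 4 * U * V ^ 3 * M + V ^ 4 * (M ^ 2 + K)) * hM

theorem diagonal_quartic_endo_unit_point {R : Type*} [CommRing R] {A B C D M : R}
    (hsum : A + B + C + D = 0) (hM : M ^ 2 = A * B * C * D) :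
    A * ((3 * B * C + A * D) * (A + D) + 4 * M * (B - C)) ^ 4
      + B * ((3 * A * C + B * D) * (B + D) + 4 * M * (C - A)) ^ 4
      + C * ((3 * A * B + C * D) * (C + D) + 4 * M * (A - B)) ^ 4
      + D * (C * D * (C + D) - A * B * (9 * C + D)) ^ 4 = 0 := by
  have h4M : (4 * M) ^ 2 = 16 * (A * B * C * D) := by rw [mul_pow, hM]; norm_num
  rw [add_mul_pow_four_of_sq_eq h4M, add_mul_pow_four_of_sq_eq h4M,
    add_mul_pow_four_of_sq_eq h4M]
  obtain rfl : D = -(A + B + C) := by linear_combination hsum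
  ring

/-- The endomorphism formulas map the diagonal quartic surface `V_{a,b,c,d}` to itself:
a polynomial identity in any commutative ring. -/
theorem stmt_18 {R : Type*} [CommRing R] (a b c d N x₀ y₀ z₀ w₀ x₁ y₁ z₁ w₁ : R)
    (hN : N ^ 2 = a * b * c * d)
    (h : a * x₀ ^ 4 + b * y₀ ^ 4 + c * z₀ ^ 4 + d * w₀ ^ 4 = 0)
    (hx₁ : x₁ = x₀ * ((3 * b * c * y₀ ^ 4 * z₀ ^ 4 + a * d * x₀ ^ 4 * w₀ ^ 4) *
        (a * x₀ ^ 4 + d * w₀ ^ 4) +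
      4 * N * x₀ ^ 2 * y₀ ^ 2 * z₀ ^ 2 * w₀ ^ 2 * (b * y₀ ^ 4 - c * z₀ ^ 4)))
    (hy₁ : y₁ = y₀ * ((3 * a * c * x₀ ^ 4 * z₀ ^ 4 + b * d * y₀ ^ 4 * w₀ ^ 4) *
        (b * y₀ ^ 4 + d * w₀ ^ 4) +
      4 * N * x₀ ^ 2 * y₀ ^ 2 * z₀ ^ 2 * w₀ ^ 2 * (c * z₀ ^ 4 - a * x₀ ^ 4)))
    (hz₁ : z₁ = z₀ * ((3 * a * b * x₀ ^ 4 * y₀ ^ 4 + c * d * z₀ ^ 4 * w₀ ^ 4) *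
        (c * z₀ ^ 4 + d * w₀ ^ 4) +
      4 * N * x₀ ^ 2 * y₀ ^ 2 * z₀ ^ 2 * w₀ ^ 2 * (a * x₀ ^ 4 - b * y₀ ^ 4)))
    (hw₁ : w₁ = w₀ * (c * d * z₀ ^ 4 * w₀ ^ 4 * (c * z₀ ^ 4 + d * w₀ ^ 4) -
      a * b * x₀ ^ 4 * y₀ ^ 4 * (9 * c * z₀ ^ 4 + d * w₀ ^ 4))) :
    a * x₁ ^ 4 + b * y₁ ^ 4 + c * z₁ ^ 4 + d * w₁ ^ 4 = 0 := by
  subst hx₁ hy₁ hz₁ hw₁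
  have hM : (N * x₀ ^ 2 * y₀ ^ 2 * z₀ ^ 2 * w₀ ^ 2) ^ 2
      = a * x₀ ^ 4 * (b * y₀ ^ 4) * (c * z₀ ^ 4) * (d * w₀ ^ 4) := by
    linear_combination (x₀ ^ 4 * y₀ ^ 4 * z₀ ^ 4 * w₀ ^ 4) * hN
  linear_combination diagonal_quartic_endo_unit_point h hM
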